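/- arXiv:1302.5665 — 2 statements merged into one kernel-verified Lean document; each statement's English description precedes it below -/
import Mathlib

section
/- Let H : ℝ^{2n} → ℝ^{2n} be a vector field satisfying the Lipschitz bound ‖H(z₁) − H(z₂)‖ ≤ a‖z₁ − z₂‖ for all z₁, z₂ in a set K invariant under the flow, with a > 0. Then every nonconstant periodic orbit of the ODE ż = H(z) contained in K has period τ ≥ 2π/a. -/
/-!
For a shift `h`, the chord `u t = z (t + h) - z t` is `τ`-periodic with mean zero and, by the
Lipschitz bound, `‖u'‖ ≤ a ‖u‖`. Wirtinger's inequality `∫ ‖u‖² ≤ (τ / 2π)² ∫ ‖u'‖²`, which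
follows from Parseval's identity since differentiation multiplies the `n`-th Fourier coefficient
by `2π i n / τ`, then gives `∫ ‖u‖² ≤ (a τ / 2π)² ∫ ‖u‖²`. Choosing `h = t₂ - t₁` with
`z t₁ ≠ z t₂` makes `u` nonzero, so `a τ ≥ 2π`.
-/

open Real MeasureTheory Set intervalIntegral Function

theorem ContinuousOn.memLp_two_Ioc {E : Type*} [NormedAddCommGroup E] {f : ℝ → E} {a b : ℝ}
    (hf : ContinuousOn f (Icc a b)) : MemLp f 2 (volume.restrict (Ioc a b)) :=
  (memLp_two_iff_integrable_sq_norm ((hf.aestronglyMeasurable measurableSet_Icc).mono_measure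
    (Measure.restrict_mono Ioc_subset_Icc_self le_rfl))).2
    ((hf.norm.pow 2).integrableOn_Icc.mono_set Ioc_subset_Icc_self)

theorem norm_fourierCoeffOn_le_of_hasDerivAt {f f' : ℝ → ℂ} {a b : ℝ} (hab : a < b)
    (hf : ∀ x ∈ Icc a b, HasDerivAt f (f' x) x) (hf' : IntervalIntegrable f' volume a b)
    (hfab : f a = f b) {n : ℤ} (hn : n ≠ 0) :
    ‖fourierCoeffOn hab f n‖ ≤ (b - a) / (2 * π) * ‖fourierCoeffOn hab f' n‖ := by
  rw [fourierCoeffOn_of_hasDerivAt hab hn (by rwa [uIcc_of_le hab.le]) hf', hfab, sub_self,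
    mul_zero, zero_sub]
  have hn' : (1 : ℝ) ≤ |(n : ℝ)| := by exact_mod_cast Int.one_le_abs hn
  have hba : 0 < b - a := sub_pos.2 hab
  simp only [norm_mul, norm_div, norm_neg, norm_one, Complex.norm_ofNat, Complex.norm_I,
    Complex.norm_real, Real.norm_eq_abs, Complex.norm_intCast, abs_of_pos pi_pos,
    ← Complex.ofReal_sub, abs_of_pos hba]
  rw [mul_one, one_div_mul_eq_div, div_mul_eq_mul_div]
  exact div_le_div_of_nonneg_left (mul_nonneg hba.le (norm_nonneg (fourierCoeffOn hab f' n)))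
    two_pi_pos (le_mul_of_one_le_right two_pi_pos.le hn')

theorem wirtinger_inequality {f f' : ℝ → ℂ} {a b : ℝ} (hab : a < b)
    (hf : ∀ x ∈ Icc a b, HasDerivAt f (f' x) x) (hf' : ContinuousOn f' (Icc a b))
    (hfab : f a = f b) (hmean : ∫ x in a..b, f x = 0) :
    ∫ x in a..b, ‖f x‖ ^ 2 ≤ ((b - a) / (2 * π)) ^ 2 * ∫ x in a..b, ‖f' x‖ ^ 2 := by
  have hcoeff (n : ℤ) : ‖fourierCoeffOn hab f n‖ ^ 2
      ≤ ((b - a) / (2 * π)) ^ 2 * ‖fourierCoeffOn hab f' n‖ ^ 2 := by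
    rcases eq_or_ne n 0 with rfl | hn
    · rw [fourierCoeffOn_eq_integral]
      simp only [neg_zero, fourier_zero, one_smul, hmean, smul_zero, norm_zero,
        zero_pow two_ne_zero]
      positivity
    · rw [← mul_pow]
      gcongr
      exact norm_fourierCoeffOn_le_of_hasDerivAt hab hf (hf'.intervalIntegrable_of_Icc hab.le)
        hfab hn
  have hfc : ContinuousOn f (Icc a b) := fun x hx => (hf x hx).continuousAt.continuousWithinAt
  have h := hasSum_le hcoeff (hasSum_sq_fourierCoeffOn hab hfc.memLp_two_Ioc)
    ((hasSum_sq_fourierCoeffOn hab hf'.memLp_two_Ioc).mul_left _)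
  rwa [smul_eq_mul, smul_eq_mul, mul_left_comm,
    mul_le_mul_iff_right₀ (inv_pos.2 (sub_pos.2 hab))] at h

theorem wirtinger_inequality_of_finiteDimensional {E : Type*} [NormedAddCommGroup E]
    [InnerProductSpace ℝ E] [FiniteDimensional ℝ E] {f f' : ℝ → E} {a b : ℝ} (hab : a < b)
    (hf : ∀ x ∈ Icc a b, HasDerivAt f (f' x) x) (hf' : ContinuousOn f' (Icc a b))
    (hfab : f a = f b) (hmean : ∫ x in a..b, f x = 0) :
    ∫ x in a..b, ‖f x‖ ^ 2 ≤ ((b - a) / (2 * π)) ^ 2 * ∫ x in a..b, ‖f' x‖ ^ 2 := by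
  let e := stdOrthonormalBasis ℝ E
  let L (i) : E →L[ℝ] ℂ := Complex.ofRealCLM.comp (innerSL ℝ (e i))
  have hnorm (v : E) : ‖v‖ ^ 2 = ∑ i, ‖L i v‖ ^ 2 := by
    rw [← e.sum_sq_norm_inner_right v]
    simp [L]
  have hsum {g : ℝ → E} (hg : ContinuousOn g (Icc a b)) :
      ∫ x in a..b, ‖g x‖ ^ 2 = ∑ i, ∫ x in a..b, ‖L i (g x)‖ ^ 2 := by
    simp_rw [hnorm]
    exact integral_finsetSum fun i _ =>
      (((L i).continuous.comp_continuousOn hg).norm.pow 2).intervalIntegrable_of_Icc hab.le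
  have hfc : ContinuousOn f (Icc a b) := fun x hx => (hf x hx).continuousAt.continuousWithinAt
  rw [hsum hfc, hsum hf', Finset.mul_sum]
  refine Finset.sum_le_sum fun i _ => wirtinger_inequality hab
    (fun x hx => (L i).hasFDerivAt.comp_hasDerivAt x (hf x hx))
    ((L i).continuous.comp_continuousOn hf') (by rw [hfab]) ?_
  rw [(L i).intervalIntegral_comp_comm (hfc.intervalIntegrable_of_Icc hab.le), hmean, map_zero]

theorem two_pi_le_mul_sub_of_norm_deriv_le {E : Type*} [NormedAddCommGroup E]
    [InnerProductSpace ℝ E] [FiniteDimensional ℝ E] {u u' : ℝ → E} {a b c : ℝ} (hab : a < b)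
    (hu : ∀ x ∈ Icc a b, HasDerivAt u (u' x) x) (hu' : ContinuousOn u' (Icc a b))
    (hu_ab : u a = u b) (hmean : ∫ x in a..b, u x = 0)
    (hbound : ∀ x ∈ Icc a b, ‖u' x‖ ≤ c * ‖u x‖) (hne : ∃ x ∈ Icc a b, u x ≠ 0) :
    2 * π ≤ c * (b - a) := by
  obtain ⟨x₀, hx₀, hux₀⟩ := hne
  have hc : 0 ≤ c :=
    nonneg_of_mul_nonneg_left ((norm_nonneg _).trans (hbound x₀ hx₀)) (norm_pos_iff.2 hux₀)
  have huc : ContinuousOn u (Icc a b) := fun x hx => (hu x hx).continuousAt.continuousWithinAt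
  set I := ∫ x in a..b, ‖u x‖ ^ 2
  have hI : 0 < I := integral_pos hab (huc.norm.pow 2) (fun _ _ => by positivity)
    ⟨x₀, hx₀, pow_pos (norm_pos_iff.2 hux₀) 2⟩
  have hI' : ∫ x in a..b, ‖u' x‖ ^ 2 ≤ c ^ 2 * I := by
    rw [← intervalIntegral.integral_const_mul]
    refine integral_mono_on hab.le ((hu'.norm.pow 2).intervalIntegrable_of_Icc hab.le)
      (((huc.norm.pow 2).intervalIntegrable_of_Icc hab.le).const_mul _) fun x hx => ?_
    rw [← mul_pow]
    exact pow_le_pow_left₀ (norm_nonneg _) (hbound x hx) 2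
  have hII : I ≤ (c * (b - a) / (2 * π)) ^ 2 * I := calc
    I ≤ ((b - a) / (2 * π)) ^ 2 * ∫ x in a..b, ‖u' x‖ ^ 2 :=
      wirtinger_inequality_of_finiteDimensional hab hu hu' hu_ab hmean
    _ ≤ ((b - a) / (2 * π)) ^ 2 * (c ^ 2 * I) := by gcongr
    _ = (c * (b - a) / (2 * π)) ^ 2 * I := by ring
  have h1 := (one_le_sq_iff₀ (div_nonneg (mul_nonneg hc (sub_pos.2 hab).le) two_pi_pos.le)).1
    ((le_mul_iff_one_le_left hI).1 hII)
  rwa [one_le_div two_pi_pos] at h1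

theorem Function.Periodic.intervalIntegral_comp_add_sub_eq_zero {E : Type*} [NormedAddCommGroup E]
    [NormedSpace ℝ E] {f : ℝ → E} {T : ℝ} (hf : Periodic f T)
    (h_int : ∀ t₁ t₂, IntervalIntegrable f volume t₁ t₂) (h : ℝ) :
    ∫ t in 0..T, (f (t + h) - f t) = 0 := by
  have h_shift : IntervalIntegrable (fun t => f (t + h)) volume 0 T := by
    simpa using (h_int h (T + h)).comp_add_right h
  rw [integral_sub h_shift (h_int _ _), integral_comp_add_right, zero_add, sub_eq_zero]
  simpa [add_comm] using hf.intervalIntegral_add_eq h 0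

/-- Yorke's theorem on minimal periods: if `H` is Lipschitz with constant `a > 0` on a
set `K` and `z` is a nonconstant periodic solution of `ż = H(z)` staying in `K` with
period `τ > 0`, then `τ ≥ 2π/a`. -/
theorem yorke_minimal_period {n : ℕ} (H : EuclideanSpace ℝ (Fin (2 * n)) → EuclideanSpace ℝ (Fin (2 * n)))
    (K : Set (EuclideanSpace ℝ (Fin (2 * n)))) (a : ℝ) (ha : 0 < a)
    (hLip : ∀ z₁ ∈ K, ∀ z₂ ∈ K, ‖H z₁ - H z₂‖ ≤ a * ‖z₁ - z₂‖)
    (z : ℝ → EuclideanSpace ℝ (Fin (2 * n)))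
    (hode : ∀ t, HasDerivAt z (H (z t)) t)
    (hK : ∀ t, z t ∈ K)
    (τ : ℝ) (hτ : 0 < τ)
    (hper : ∀ t, z (t + τ) = z t)
    (hnonconst : ∃ t₁ t₂, z t₁ ≠ z t₂) :
    τ ≥ 2 * π / a := by
  obtain ⟨t₁, t₂, hne⟩ := hnonconst
  set h := t₂ - t₁
  have hzper : Periodic z τ := hper
  have hz : Continuous z := continuous_iff_continuousAt.2 fun t => (hode t).continuousAt
  have hH : LipschitzOnWith a.toNNReal H K := .of_dist_le_mul fun x hx y hy => by
    simpa only [dist_eq_norm, Real.coe_toNNReal a ha.le] using hLip x hx y hy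
  have hHz : Continuous fun t => H (z t) := hH.continuousOn.comp_continuous hz hK
  obtain ⟨t₀, ht₀, hzt₀⟩ : ∃ t₀ ∈ Ico 0 τ, z (t₁ + h) - z t₁ = z (t₀ + h) - z t₀ :=
    ((hzper.add_const h).sub hzper).exists_mem_Ico₀ hτ t₁
  have h2pi := two_pi_le_mul_sub_of_norm_deriv_le (u := fun t => z (t + h) - z t)
    (u' := fun t => H (z (t + h)) - H (z t)) hτ
    (fun t _ => ((hode (t + h)).comp_add_const t h).sub (hode t))
    ((hHz.comp (continuous_add_const h)).sub hHz).continuousOn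
    (by simpa using ((hzper.add_const h).sub hzper 0).symm)
    (hzper.intervalIntegral_comp_add_sub_eq_zero (fun _ _ => hz.intervalIntegrable _ _) h)
    (fun t _ => hLip _ (hK _) _ (hK _))
    ⟨t₀, Ico_subset_Icc_self ht₀, by rw [← hzt₀]; simpa [h, sub_eq_zero] using hne.symm⟩
  rw [sub_zero] at h2pi
  exact (div_le_iff₀' ha).2 h2pi
end

section
/- Let S(t,x,η) be a smooth generating function of the Hamiltonian flow Φ_t of p, i.e. Φ_t(∂_η S(t,x,η), η) = (x, ∂_x S(t,x,η)), and define Ψ(t,x,ξ) = S(t,x,ξ) − ⟨x,ξ⟩ + tE. If z₀ = (x₀,ξ₀) is a critical point of Ψ(t,·,·) (for fixed t), then for δz ∈ ℝ^{2n}: d²_z Ψ(t, z₀)·δz = 0 if and only if dΦ_t(z₀)·δz = δz. In particular (t, z₀) is a nondegenerate critical point of Ψ in the z-variables iff t is not a period of the linearized flow dΦ_t(z₀). -/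
open ContinuousLinearMap InnerProductSpace

set_option maxHeartbeats 1000000

local notation "⟪" x ", " y "⟫" => @inner ℝ _ _ x y

theorem aux_phase {F : Type*} [NormedAddCommGroup F] [InnerProductSpace ℝ F]
    [FiniteDimensional ℝ F]
    (Φ : F × F → F × F) (hΦ : ContDiff ℝ (⊤ : ℕ∞) Φ)
    (S : F → F → ℝ)
    (hS : ContDiff ℝ (⊤ : ℕ∞) (fun z : F × F => S z.1 z.2))
    (hgen : ∀ x η, Φ (gradient (S x) η, η) = (x, gradient (fun y => S y η) x))
    (c : ℝ) (z₀ : F × F)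
    (hcrit : fderiv ℝ (fun z : F × F => S z.1 z.2 - (inner ℝ z.1 z.2 : ℝ) + c) z₀ = 0)
    (δz : F × F) :
    fderiv ℝ (fderiv ℝ (fun z : F × F => S z.1 z.2 - (inner ℝ z.1 z.2 : ℝ) + c)) z₀ δz = 0 ↔
      fderiv ℝ Φ z₀ δz = δz := by
  set f : F × F → ℝ := fun z : F × F => S z.1 z.2 with hfdef
  set Ψ : F × F → ℝ := fun z : F × F => S z.1 z.2 - (inner ℝ z.1 z.2 : ℝ) + c with hΨdef
  have hf2 : ContDiff ℝ 2 f := hS.of_le (by exact (WithTop.coe_le_coe.mpr (le_top : (2:ℕ∞) ≤ ⊤) : ((2:ℕ∞) : WithTop ℕ∞) ≤ ((⊤:ℕ∞) : WithTop ℕ∞)))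
  have hfd : Differentiable ℝ f := hf2.differentiable (by norm_num)
  have hf' : ContDiff ℝ 1 (fderiv ℝ f) := hf2.fderiv_right (by norm_num)
  have hfd' : Differentiable ℝ (fderiv ℝ f) := hf'.differentiable one_ne_zero
  set D2 : (F × F) →L[ℝ] (F × F) →L[ℝ] ℝ := fderiv ℝ (fderiv ℝ f) z₀ with hD2def
  set inrm : F →L[ℝ] F × F := (0 : F →L[ℝ] F).prod (ContinuousLinearMap.id ℝ F) with hinrm
  set inlm : F →L[ℝ] F × F := (ContinuousLinearMap.id ℝ F).prod (0 : F →L[ℝ] F) with hinlm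
  -- partial derivatives
  have hpart2 : ∀ z : F × F, HasFDerivAt (S z.1) ((fderiv ℝ f z).comp inrm) z.2 :=
    fun z => (hfd _).hasFDerivAt.comp z.2 ((hasFDerivAt_const z.1 z.2).prodMk (hasFDerivAt_id z.2))
  have hpart1 : ∀ z : F × F, HasFDerivAt (fun y => S y z.2) ((fderiv ℝ f z).comp inlm) z.1 :=
    fun z => (hfd _).hasFDerivAt.comp z.1 ((hasFDerivAt_id z.1).prodMk (hasFDerivAt_const z.2 z.1))
  set g : F × F → F := fun z => gradient (S z.1) z.2 with hgdef
  set h : F × F → F := fun z => gradient (fun y => S y z.2) z.1 with hhdef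
  have hginner : ∀ (z : F × F) v, ⟪g z, v⟫ = fderiv ℝ f z (0, v) := by
    intro z v
    rw [hgdef]
    simp only [gradient]
    rw [toDual_symm_apply, (hpart2 z).fderiv]
    simp [hinrm]
  have hhinner : ∀ (z : F × F) u, ⟪h z, u⟫ = fderiv ℝ f z (u, 0) := by
    intro z u
    rw [hhdef]
    simp only [gradient]
    rw [toDual_symm_apply, (hpart1 z).fderiv]
    simp [hinlm]
  -- the linear maps extracting gradients from functionals
  set Tr : ((F × F) →L[ℝ] ℝ) →L[ℝ] (F →L[ℝ] ℝ) := (compL ℝ F (F × F) ℝ).flip inrm with hTr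
  set Tl : ((F × F) →L[ℝ] ℝ) →L[ℝ] (F →L[ℝ] ℝ) := (compL ℝ F (F × F) ℝ).flip inlm with hTl
  set Td : (F →L[ℝ] ℝ) →L[ℝ] F :=
    ((toDual ℝ F).symm.toContinuousLinearEquiv : StrongDual ℝ F ≃L[ℝ] F).toContinuousLinearMap
    with hTd
  have hTdapp : ∀ (L : F →L[ℝ] ℝ) v, ⟪Td L, v⟫ = L v := by
    intro L v
    rw [hTd]
    exact toDual_symm_apply
  set Dg : (F × F) →L[ℝ] F := (Td.comp Tr).comp D2 with hDgdef
  set Dh : (F × F) →L[ℝ] F := (Td.comp Tl).comp D2 with hDhdef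
  have hDg : ∀ (w : F × F) v, ⟪Dg w, v⟫ = D2 w (0, v) := by
    intro w v
    rw [hDgdef]
    simp only [comp_apply]
    rw [hTdapp]
    simp [hTr, hinrm]
  have hDh : ∀ (w : F × F) u, ⟪Dh w, u⟫ = D2 w (u, 0) := by
    intro w u
    rw [hDhdef]
    simp only [comp_apply]
    rw [hTdapp]
    simp [hTl, hinlm]
  -- g and h are differentiable with these derivatives
  have hgf : g = fun z => Td (Tr (fderiv ℝ f z)) := by
    funext z
    apply ext_inner_right ℝ
    intro v
    rw [hginner, hTdapp]
    simp [hTr, hinrm]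
  have hhf : h = fun z => Td (Tl (fderiv ℝ f z)) := by
    funext z
    apply ext_inner_right ℝ
    intro u
    rw [hhinner, hTdapp]
    simp [hTl, hinlm]
  have hgD : HasFDerivAt g Dg z₀ := by
    rw [hgf, hDgdef, comp_assoc]
    have := (Td.comp Tr).hasFDerivAt.comp z₀ (hf'.differentiable one_ne_zero z₀).hasFDerivAt; exact this
  have hhD : HasFDerivAt h Dh z₀ := by
    rw [hhf, hDhdef, comp_assoc]
    have := (Td.comp Tl).hasFDerivAt.comp z₀ (hf'.differentiable one_ne_zero z₀).hasFDerivAt; exact this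
  -- derivative of Ψ
  have hΨders : ∀ z : F × F, HasFDerivAt Ψ
      (fderiv ℝ f z - ((fderivInnerCLM ℝ (z.1, z.2)).comp ((fst ℝ F F).prod (snd ℝ F F)))) z :=
    fun z => ((hfd z).hasFDerivAt.sub (hasFDerivAt_fst.inner ℝ hasFDerivAt_snd)).add_const c
  have hΨ0 : ∀ u : F × F, fderiv ℝ f z₀ u = ⟪z₀.1, u.2⟫ + ⟪u.1, z₀.2⟫ := by
    intro u
    have h1 := (hΨders z₀).fderiv
    rw [hcrit] at h1
    have h2 : fderiv ℝ f z₀ =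
        (fderivInnerCLM ℝ (z₀.1, z₀.2)).comp ((fst ℝ F F).prod (snd ℝ F F)) := by
      have := sub_eq_zero.mp h1.symm
      exact this
    rw [h2]
    simp [fderivInnerCLM_apply]
  have hz1 : g z₀ = z₀.1 := by
    apply ext_inner_right ℝ
    intro v
    rw [hginner, hΨ0 (0, v)]
    simp
  -- key linearized generating relation
  have heq : (fun z : F × F => Φ (g z, z.2)) = fun z : F × F => (z.1, h z) := by
    funext z
    exact hgen z.1 z.2
  have hΦ2 : Differentiable ℝ Φ := (hΦ.of_le (by simp)).differentiable one_ne_zero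
  have hΦd : HasFDerivAt (fun z : F × F => Φ (g z, z.2))
      ((fderiv ℝ Φ z₀).comp (Dg.prod (snd ℝ F F))) z₀ := by
    have h1 : HasFDerivAt (fun z : F × F => (g z, z.2)) (Dg.prod (snd ℝ F F)) z₀ :=
      hgD.prodMk hasFDerivAt_snd
    have h2 : HasFDerivAt Φ (fderiv ℝ Φ z₀) (g z₀, z₀.2) := by
      rw [hz1]
      exact (hΦ2 z₀).hasFDerivAt
    exact h2.comp z₀ h1
  have hrhs : HasFDerivAt (fun z : F × F => (z.1, h z)) ((fst ℝ F F).prod Dh) z₀ :=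
    hasFDerivAt_fst.prodMk hhD
  rw [heq] at hΦd
  have key : (fderiv ℝ Φ z₀).comp (Dg.prod (snd ℝ F F)) = (fst ℝ F F).prod Dh :=
    hΦd.unique hrhs
  have keyw : ∀ w : F × F, fderiv ℝ Φ z₀ (Dg w, w.2) = (w.1, Dh w) := by
    intro w
    have := DFunLike.congr_fun key w
    simpa using this
  -- Hessian formula
  have hΨ2 : ContDiff ℝ 2 Ψ :=
    (hf2.sub (contDiff_fst.inner ℝ contDiff_snd)).add contDiff_const
  have hΨ' : Differentiable ℝ (fderiv ℝ Ψ) :=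
    (hΨ2.fderiv_right (by norm_num)).differentiable one_ne_zero
  have hHess : ∀ u : F × F, fderiv ℝ (fderiv ℝ Ψ) z₀ δz u
      = D2 δz u - ⟪u.2, δz.1⟫ - ⟪u.1, δz.2⟫ := by
    intro u
    have hfun : (fun z : F × F => fderiv ℝ Ψ z u)
        = fun z : F × F => fderiv ℝ f z u -
            (((innerSL ℝ u.2).comp (fst ℝ F F) + (innerSL ℝ u.1).comp (snd ℝ F F)) z) := by
      funext z
      rw [(hΨders z).fderiv]
      simp [fderivInnerCLM_apply, real_inner_comm]
    have hA : HasFDerivAt (fun z : F × F => fderiv ℝ Ψ z u)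
        ((fderiv ℝ Ψ z₀).comp (0 : (F × F) →L[ℝ] (F × F)) + (fderiv ℝ (fderiv ℝ Ψ) z₀).flip u) z₀ :=
      (hΨ' z₀).hasFDerivAt.clm_apply (hasFDerivAt_const u z₀)
    have hB : HasFDerivAt (fun z : F × F => fderiv ℝ Ψ z u)
        (((fderiv ℝ f z₀).comp (0 : (F × F) →L[ℝ] (F × F)) + D2.flip u) -
          ((innerSL ℝ u.2).comp (fst ℝ F F) + (innerSL ℝ u.1).comp (snd ℝ F F))) z₀ := by
      rw [hfun]
      exact ((hfd' z₀).hasFDerivAt.clm_apply (hasFDerivAt_const u z₀)).sub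
        (ContinuousLinearMap.hasFDerivAt
          ((innerSL ℝ u.2).comp (fst ℝ F F) + (innerSL ℝ u.1).comp (snd ℝ F F)))
    have hEq := hA.unique hB
    have := DFunLike.congr_fun hEq δz
    simp only [ContinuousLinearMap.add_apply, ContinuousLinearMap.comp_apply,
      ContinuousLinearMap.zero_apply, ContinuousLinearMap.flip_apply,
      ContinuousLinearMap.sub_apply, ContinuousLinearMap.coe_fst', ContinuousLinearMap.coe_snd',
      innerSL_apply_apply, map_zero] at this
    linarith [this]
  have hD2split : ∀ (w u : F × F), D2 w u = ⟪Dh w, u.1⟫ + ⟪Dg w, u.2⟫ := by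
    intro w u
    have hu : u = (u.1, 0) + (0, u.2) := by
      ext <;> simp
    rw [hDh, hDg]
    conv_lhs => rw [hu]
    rw [map_add]
  constructor
  · intro h0
    have h0' : ∀ u : F × F, D2 δz u = ⟪u.2, δz.1⟫ + ⟪u.1, δz.2⟫ := by
      intro u
      have := hHess u
      rw [h0] at this
      simp only [ContinuousLinearMap.zero_apply] at this
      linarith [this]
    have hDgδ : Dg δz = δz.1 := by
      apply ext_inner_right ℝ
      intro v
      rw [hDg, h0' (0, v)]
      simp [real_inner_comm]
    have hDhδ : Dh δz = δz.2 := by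
      apply ext_inner_right ℝ
      intro u
      rw [hDh, h0' (u, 0)]
      simp [real_inner_comm]
    have hk := keyw δz
    rw [hDgδ, hDhδ] at hk
    simpa using hk
  · intro hfix
    set gx : F →L[ℝ] F := Dg.comp (inl ℝ F F) with hgx
    have hinj : ∀ a : F, gx a = 0 → a = 0 := by
      intro a ha
      have hk := keyw (a, 0)
      have h00 : Dg (a, 0) = 0 := by
        rw [hgx] at ha
        simpa using ha
      have hL : fderiv ℝ Φ z₀ (Dg (a, 0), ((a, 0) : F × F).2) = 0 := by
        rw [h00, show ((0 : F), ((a, 0) : F × F).2) = (0 : F × F) from rfl]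
        exact map_zero _
      rw [hL] at hk
      have h3 := congrArg Prod.fst hk
      simpa using h3.symm
    have hsurj : Function.Surjective gx := by
      have : Function.Injective (gx : F →ₗ[ℝ] F) := by
        rw [← LinearMap.ker_eq_bot, LinearMap.ker_eq_bot']
        intro a ha
        exact hinj a ha
      have hs := LinearMap.injective_iff_surjective.mp this
      exact hs
    obtain ⟨a, ha⟩ := hsurj (δz.1 - Dg (0, δz.2))
    have hDgw : Dg (a, δz.2) = δz.1 := by
      have hsplit : ((a, δz.2) : F × F) = (a, 0) + (0, δz.2) := by ext <;> simp
      rw [hsplit, map_add]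
      have : Dg (a, 0) = gx a := by rw [hgx]; simp
      rw [this, ha]
      abel
    have hk := keyw (a, δz.2)
    have hk' : fderiv ℝ Φ z₀ δz = (a, Dh (a, δz.2)) := by
      simpa [hDgw] using hk
    rw [hfix] at hk'
    have haδ : δz.1 = a := by simpa using congrArg Prod.fst hk'
    have hDh2 : δz.2 = Dh (a, δz.2) := by simpa using congrArg Prod.snd hk'
    have hw : ((a, δz.2) : F × F) = δz := by
      rw [← haδ]
    have hDgδ : Dg δz = δz.1 := by
      rw [← hw]
      exact hDgw.trans haδ
    have hDhδ : Dh δz = δz.2 := by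
      rw [← hw]
      exact hDh2.symm
    apply ContinuousLinearMap.ext
    intro u
    rw [hHess u, hD2split δz u, hDgδ, hDhδ]
    simp [real_inner_comm]

/-- Degenerate directions of the phase `Ψ(t,x,ξ) = S(t,x,ξ) − ⟨x,ξ⟩ + tE` of the trace
integral correspond to fixed vectors of the linearized flow: if `S` generates the flow `Φ_t`
(`Φ_t(∂_ηS(t,x,η), η) = (x, ∂_xS(t,x,η))`) and `z₀` is a critical point of `Ψ(t,·,·)`, then
`d²_zΨ(t,z₀)·δz = 0 ↔ dΦ_t(z₀)·δz = δz`; in particular `z₀` is a nondegenerate critical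
point of `Ψ(t,·)` iff `t` is not a period of `dΦ_t(z₀)`. -/
theorem phase_hessian_kernel_iff_fixed_vector {n : ℕ}
    (p : EuclideanSpace ℝ (Fin n) × EuclideanSpace ℝ (Fin n) → ℝ)
    (Φ : ℝ → EuclideanSpace ℝ (Fin n) × EuclideanSpace ℝ (Fin n) →
          EuclideanSpace ℝ (Fin n) × EuclideanSpace ℝ (Fin n))
    (hΦ : ∀ t, ContDiff ℝ (⊤ : ℕ∞) (Φ t))
    (S : ℝ → EuclideanSpace ℝ (Fin n) → EuclideanSpace ℝ (Fin n) → ℝ)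
    (hS : ContDiff ℝ (⊤ : ℕ∞) (fun q : ℝ × EuclideanSpace ℝ (Fin n) × EuclideanSpace ℝ (Fin n) =>
      S q.1 q.2.1 q.2.2))
    (hgen : ∀ t x η, Φ t (gradient (S t x) η, η) = (x, gradient (fun y => S t y η) x))
    (E : ℝ) (t : ℝ)
    (z₀ : EuclideanSpace ℝ (Fin n) × EuclideanSpace ℝ (Fin n))
    (hcrit : fderiv ℝ
      (fun z : EuclideanSpace ℝ (Fin n) × EuclideanSpace ℝ (Fin n) =>
        S t z.1 z.2 - (inner ℝ z.1 z.2 : ℝ) + t * E) z₀ = 0) :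
    (∀ δz : EuclideanSpace ℝ (Fin n) × EuclideanSpace ℝ (Fin n),
      fderiv ℝ (fderiv ℝ
        (fun z : EuclideanSpace ℝ (Fin n) × EuclideanSpace ℝ (Fin n) =>
          S t z.1 z.2 - (inner ℝ z.1 z.2 : ℝ) + t * E)) z₀ δz = 0 ↔
      fderiv ℝ (Φ t) z₀ δz = δz) := by
  intro δz
  have hSt : ContDiff ℝ (⊤ : ℕ∞) (fun z : EuclideanSpace ℝ (Fin n) × EuclideanSpace ℝ (Fin n) =>
      S t z.1 z.2) := hS.comp (contDiff_const.prodMk contDiff_id)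
  exact aux_phase (Φ t) (hΦ t) (S t) hSt (hgen t) (t * E) z₀ hcrit δz
end
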